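/- arXiv:2002.01711 — 3 statements merged into one kernel-verified Lean document; each statement's English description precedes it below -/
import Mathlib

section
/- For every time t ≥ 0, every action a' ∈ {0,1}, and every bounded measurable test function φ : S × {0,1} → ℝ, one has E[ {Q(a'; A_t, S_t) − Y_t − γ Q(a'; a', S_{t+1})} · φ(S_t, A_t) ] = 0. -/
/-!
Taking one step of the geometric series and swapping it with the kernel integral (dominated
convergence) gives the Bellman equation `Q(a'; a, s) = r(a, s) + γ (P_a Q(a'; a', ·))(s)`.
Given `H_t`, the outcome `Y_t` has mean `r(A_t, S_t)` and `Q(a'; a', S_{t+1})` has mean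
`(P_{A_t} Q(a'; a', ·))(S_t)`, so the Bellman residual has conditional mean zero; the test function
`φ(S_t, A_t)` is bounded and `H_t`-measurable, so it can be pulled out of the conditional
expectation.
-/

open MeasureTheory Filter

section DiscountedSeries

variable {γ C : ℝ}

lemma summable_pow_mul_of_abs_le (hγ0 : 0 ≤ γ) (hγ1 : γ < 1) {g : ℕ → ℝ}
    (hg : ∀ n, |g n| ≤ C) : Summable fun n => γ ^ n * g n :=
  .of_norm_bounded ((summable_geometric_of_lt_one hγ0 hγ1).mul_right C) fun n => by
    rw [Real.norm_eq_abs, abs_mul, abs_of_nonneg (pow_nonneg hγ0 n)]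
    exact mul_le_mul_of_nonneg_left (hg n) (pow_nonneg hγ0 n)

lemma abs_tsum_pow_mul_le (hγ0 : 0 ≤ γ) (hγ1 : γ < 1) {g : ℕ → ℝ} (hg : ∀ n, |g n| ≤ C) :
    |∑' n, γ ^ n * g n| ≤ C / (1 - γ) := by
  rw [div_eq_inv_mul, ← Real.norm_eq_abs]
  refine tsum_of_norm_bounded ((hasSum_geometric_of_lt_one hγ0 hγ1).mul_right C) fun n => ?_
  rw [Real.norm_eq_abs, abs_mul, abs_of_nonneg (pow_nonneg hγ0 n)]
  exact mul_le_mul_of_nonneg_left (hg n) (pow_nonneg hγ0 n)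

end DiscountedSeries

lemma abs_integral_le_of_abs_le {α : Type*} [MeasurableSpace α] {ν : Measure α}
    [IsProbabilityMeasure ν] {f : α → ℝ} {C : ℝ} (hf : ∀ x, |f x| ≤ C) :
    |∫ x, f x ∂ν| ≤ C := by
  simpa using norm_integral_le_of_norm_le_const (μ := ν)
    (Eventually.of_forall fun x => (Real.norm_eq_abs (f x)).trans_le (hf x))

section MarkovOperator

variable {S : Type*} [MeasurableSpace S]

noncomputable def markovOperator (κ : S → Measure S) (f : S → ℝ) (s : S) : ℝ := ∫ s', f s' ∂κ s

/-- The value function `V_a` of the paper is `discountedValue γ (P a) (r a)`. -/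
noncomputable def discountedValue (γ : ℝ) (κ : S → Measure S) (ρ : S → ℝ) (s : S) : ℝ :=
  ∑' n, γ ^ n * (markovOperator κ)^[n] ρ s

variable {κ κ' : S → Measure S} {γ C : ℝ} {ρ : S → ℝ}

lemma measurable_markovOperator_iterate
    (hκ : ∀ f, Measurable f → Measurable (markovOperator κ f)) {f : S → ℝ}
    (hf : Measurable f) (n : ℕ) : Measurable ((markovOperator κ)^[n] f) :=
  Function.Iterate.rec Measurable hf hκ n

lemma measurable_discountedValue (hκ : ∀ f, Measurable f → Measurable (markovOperator κ f))
    (hρ : Measurable ρ) : Measurable (discountedValue γ κ ρ) :=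
  .tsum fun n => measurable_const.mul (measurable_markovOperator_iterate hκ hρ n)

variable [∀ s, IsProbabilityMeasure (κ s)] [∀ s, IsProbabilityMeasure (κ' s)]

lemma markovOperator_const (c : ℝ) (s : S) : markovOperator κ (fun _ => c) s = c := by
  simp [markovOperator]

lemma abs_markovOperator_le {f : S → ℝ} (hf : ∀ s, |f s| ≤ C) (s : S) :
    |markovOperator κ f s| ≤ C :=
  abs_integral_le_of_abs_le hf

lemma abs_markovOperator_iterate_le {f : S → ℝ} (hf : ∀ s, |f s| ≤ C) (n : ℕ) (s : S) :
    |(markovOperator κ)^[n] f s| ≤ C :=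
  Function.Iterate.rec (motive := fun g : S → ℝ => ∀ s, |g s| ≤ C) hf
    (fun _ hg => abs_markovOperator_le hg) n s

lemma markovOperator_tsum_pow_mul (hγ0 : 0 ≤ γ) (hγ1 : γ < 1) {g : ℕ → S → ℝ}
    (hg : ∀ n, Measurable (g n)) (hgC : ∀ n s, |g n s| ≤ C) (s : S) :
    markovOperator κ (fun s' => ∑' n, γ ^ n * g n s') s
      = ∑' n, γ ^ n * markovOperator κ (g n) s := by
  have hint : ∀ n, Integrable (fun s' => γ ^ n * g n s') (κ s) := fun n =>
    .of_bound (measurable_const.mul (hg n)).aestronglyMeasurable (γ ^ n * C)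
      (Eventually.of_forall fun s' => by
        rw [Real.norm_eq_abs, abs_mul, abs_of_nonneg (pow_nonneg hγ0 n)]
        exact mul_le_mul_of_nonneg_left (hgC n s') (pow_nonneg hγ0 n))
  have hsum : Summable fun n => ∫ s', ‖γ ^ n * g n s'‖ ∂κ s := by
    simp_rw [norm_mul, norm_pow, Real.norm_eq_abs, abs_of_nonneg hγ0, integral_const_mul]
    exact summable_pow_mul_of_abs_le hγ0 hγ1 fun n =>
      abs_integral_le_of_abs_le fun s' => (abs_abs (g n s')).trans_le (hgC n s')
  simp_rw [markovOperator, ← integral_const_mul]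
  exact (integral_tsum_of_summable_integral_norm hint hsum).symm

lemma abs_discountedValue_le (hγ0 : 0 ≤ γ) (hγ1 : γ < 1) (hρ : ∀ s, |ρ s| ≤ C) (s : S) :
    |discountedValue γ κ ρ s| ≤ C / (1 - γ) :=
  abs_tsum_pow_mul_le hγ0 hγ1 fun n => abs_markovOperator_iterate_le hρ n s

lemma discountedValue_eq_add (hγ0 : 0 ≤ γ) (hγ1 : γ < 1) (hρ : ∀ s, |ρ s| ≤ C) (s : S) :
    discountedValue γ κ ρ s
      = ρ s + ∑' n, γ ^ (n + 1) * markovOperator κ ((markovOperator κ)^[n] ρ) s := by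
  rw [discountedValue, (summable_pow_mul_of_abs_le hγ0 hγ1
    fun n => abs_markovOperator_iterate_le hρ n s).tsum_eq_zero_add]
  simp only [pow_zero, one_mul, Function.iterate_zero, id_eq, Function.iterate_succ_apply']

lemma tsum_pow_succ_mul_markovOperator (hγ0 : 0 ≤ γ) (hγ1 : γ < 1)
    (hκ' : ∀ f, Measurable f → Measurable (markovOperator κ' f)) (hρm : Measurable ρ)
    (hρ : ∀ s, |ρ s| ≤ C) (s : S) :
    ∑' n, γ ^ (n + 1) * markovOperator κ ((markovOperator κ')^[n] ρ) s
      = γ * markovOperator κ (discountedValue γ κ' ρ) s := by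
  unfold discountedValue
  rw [markovOperator_tsum_pow_mul hγ0 hγ1
    (measurable_markovOperator_iterate hκ' hρm) (abs_markovOperator_iterate_le hρ) s,
    ← tsum_mul_left]
  simp_rw [pow_succ, mul_comm _ γ, mul_assoc]

end MarkovOperator

section QFunction

variable {A S : Type*} [MeasurableSpace S]

/-- The paper's `Q(a'; a, s)`: take action `a` once, then action `a'` forever. -/
noncomputable def qFunction (γ : ℝ) (P : A → S → Measure S) (r : A → S → ℝ) (a' a : A) (s : S) :
    ℝ :=
  r a s + ∑' n, γ ^ (n + 1) * markovOperator (P a) ((markovOperator (P a'))^[n] (r a')) s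

variable {P : A → S → Measure S} [∀ a s, IsProbabilityMeasure (P a s)] {r : A → S → ℝ}
  {γ R : ℝ}

lemma qFunction_self (hγ0 : 0 ≤ γ) (hγ1 : γ < 1) (hrbdd : ∀ a s, |r a s| ≤ R) (a' : A) :
    qFunction γ P r a' a' = discountedValue γ (P a') (r a') :=
  funext fun s => (discountedValue_eq_add (κ := P a') hγ0 hγ1 (hrbdd a') s).symm

lemma qFunction_eq_add_mul_markovOperator (hγ0 : 0 ≤ γ) (hγ1 : γ < 1)
    (hPmeas : ∀ a f, Measurable f → Measurable (markovOperator (P a) f))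
    (hrmeas : ∀ a, Measurable (r a)) (hrbdd : ∀ a s, |r a s| ≤ R) (a' a : A) (s : S) :
    qFunction γ P r a' a s = r a s + γ * markovOperator (P a) (qFunction γ P r a' a') s := by
  rw [qFunction_self hγ0 hγ1 hrbdd, qFunction,
    tsum_pow_succ_mul_markovOperator hγ0 hγ1 (hPmeas a') (hrmeas a') (hrbdd a')]

lemma measurable_qFunction (hγ0 : 0 ≤ γ) (hγ1 : γ < 1)
    (hPmeas : ∀ a f, Measurable f → Measurable (markovOperator (P a) f))
    (hrmeas : ∀ a, Measurable (r a)) (hrbdd : ∀ a s, |r a s| ≤ R) (a' a : A) :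
    Measurable (qFunction γ P r a' a) := by
  rw [funext (qFunction_eq_add_mul_markovOperator hγ0 hγ1 hPmeas hrmeas hrbdd a' a),
    qFunction_self hγ0 hγ1 hrbdd]
  exact (hrmeas a).add (measurable_const.mul
    (hPmeas a _ (measurable_discountedValue (hPmeas a') (hrmeas a'))))

lemma abs_qFunction_le (hγ0 : 0 ≤ γ) (hγ1 : γ < 1)
    (hPmeas : ∀ a f, Measurable f → Measurable (markovOperator (P a) f))
    (hrmeas : ∀ a, Measurable (r a)) (hrbdd : ∀ a s, |r a s| ≤ R) (a' a : A) (s : S) :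
    |qFunction γ P r a' a s| ≤ R / (1 - γ) := by
  have hV := abs_discountedValue_le (κ := P a') hγ0 hγ1 (hrbdd a')
  rw [qFunction_eq_add_mul_markovOperator hγ0 hγ1 hPmeas hrmeas hrbdd,
    qFunction_self hγ0 hγ1 hrbdd]
  calc |r a s + γ * markovOperator (P a) (discountedValue γ (P a') (r a')) s|
      ≤ R + γ * (R / (1 - γ)) := (abs_add_le _ _).trans <| add_le_add (hrbdd a s) <| by
        rw [abs_mul, abs_of_nonneg hγ0]
        exact mul_le_mul_of_nonneg_left (abs_markovOperator_le hV s) hγ0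
    _ = R / (1 - γ) := by field_simp [(sub_pos.2 hγ1).ne']; ring

end QFunction

section ConditionalExpectation

variable {Ω : Type*} {m m₀ : MeasurableSpace Ω} {μ : Measure Ω}

lemma le_of_condExp_one_ae_eq [NeZero μ] (h : μ[fun _ => (1 : ℝ) | m] =ᵐ[μ] fun _ => 1) :
    m ≤ m₀ := by
  by_contra hm
  rw [condExp_of_not_le hm] at h
  obtain ⟨ω, hω⟩ := h.exists
  exact zero_ne_one hω

lemma condExp_sub_sub_mul_ae_eq_zero (hm : m ≤ m₀) [SigmaFinite (μ.trim hm)]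
    {X Y Z y z : Ω → ℝ} (c : ℝ) (hXm : StronglyMeasurable[m] X) (hX : Integrable X μ)
    (hY : Integrable Y μ) (hZ : Integrable Z μ) (hYy : μ[Y | m] =ᵐ[μ] y)
    (hZz : μ[Z | m] =ᵐ[μ] z) (hXyz : ∀ ω, X ω = y ω + c * z ω) :
    μ[fun ω => X ω - Y ω - c * Z ω | m] =ᵐ[μ] 0 := by
  change μ[X - Y - c • Z | m] =ᵐ[μ] 0
  filter_upwards [condExp_sub (hX.sub hY) (hZ.smul c) m, condExp_sub hX hY m,
    condExp_smul c Z m, hYy, hZz] with ω h₁ h₂ h₃ h₄ h₅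
  rw [h₁, Pi.sub_apply, h₂, Pi.sub_apply, h₃, Pi.smul_apply, h₄, h₅,
    condExp_of_stronglyMeasurable hm hXm hX, hXyz, smul_eq_mul]
  simp

lemma integral_mul_eq_zero_of_condExp_ae_eq_zero [IsFiniteMeasure μ] (hm : m ≤ m₀)
    {X g : Ω → ℝ} {C : ℝ} (hX : Integrable X μ) (hgm : StronglyMeasurable[m] g)
    (hgC : ∀ ω, |g ω| ≤ C) (hXm : μ[X | m] =ᵐ[μ] 0) : ∫ ω, X ω * g ω ∂μ = 0 := by
  have hXg : Integrable (X * g) μ :=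
    hX.mul_bdd (hgm.mono hm).aestronglyMeasurable (Eventually.of_forall hgC)
  calc ∫ ω, X ω * g ω ∂μ = ∫ ω, μ[X * g | m] ω ∂μ := (integral_condExp hm).symm
    _ = ∫ ω, (μ[X | m] * g) ω ∂μ :=
      integral_congr_ae (condExp_mul_of_stronglyMeasurable_right hgm hXg hX)
    _ = 0 := by
      rw [integral_congr_ae (hXm.mul (EventuallyEq.refl _ g))]
      simp

end ConditionalExpectation

theorem q_function_estimating_equation_general
    {S : Type*} [MeasurableSpace S]
    {Ω : Type*} [MeasurableSpace Ω] (μ : Measure Ω) [IsProbabilityMeasure μ]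
    -- the Markov transition kernel `P(·;a,s)`
    (P : Bool → S → Measure S)
    (hPprob : ∀ a s, IsProbabilityMeasure (P a s))
    (hPmeas : ∀ (a : Bool) (f : S → ℝ), Measurable f →
      Measurable fun s => ∫ s', f s' ∂(P a s))
    -- the bounded measurable reward function
    (r : Bool → S → ℝ) (R : ℝ)
    (hrmeas : ∀ a, Measurable (r a))
    (hrbdd : ∀ a s, |r a s| ≤ R)
    -- the discount factor
    (γ : ℝ) (hγ0 : 0 < γ) (hγ1 : γ < 1)
    -- the transition operator `P_a`
    (Pop : Bool → (S → ℝ) → (S → ℝ))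
    (hPop : ∀ a f s, Pop a f s = ∫ s', f s' ∂(P a s))
    -- the value function and the Q-function
    (Q : Bool → Bool → S → ℝ)
    (hQ : ∀ a' a s, Q a' a s
      = r a s + ∑' t : ℕ, γ ^ (t + 1) * (Pop a ((Pop a')^[t] (r a'))) s)
    -- the observed state, action and outcome processes
    (St : ℕ → Ω → S) (At : ℕ → Ω → Bool) (Yt : ℕ → Ω → ℝ)
    (hSt : ∀ t, Measurable (St t))
    (hYt : ∀ t, Integrable (Yt t) μ)
    -- the filtration `H_t = σ(S_0, A_0, Y_0, …, S_{t−1}, A_{t−1}, Y_{t−1}, S_t, A_t)`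
    (H : ℕ → MeasurableSpace Ω)
    (hH : ∀ t, H t
      = (⨆ j ≤ t, MeasurableSpace.comap (St j) inferInstance)
        ⊔ (⨆ j ≤ t, MeasurableSpace.comap (At j) inferInstance)
        ⊔ (⨆ j < t, MeasurableSpace.comap (Yt j) inferInstance))
    -- the observed-data Markov assumption
    (hMarkov : ∀ (t : ℕ) (g : S → ℝ), Measurable g → (∃ B, ∀ s, |g s| ≤ B) →
      μ[(fun ω => g (St (t + 1) ω)) | H t] =ᵐ[μ] fun ω => Pop (At t ω) g (St t ω))
    -- the conditional mean independence assumption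
    (hCMI : ∀ t : ℕ, μ[Yt t | H t] =ᵐ[μ] fun ω => r (At t ω) (St t ω)) :
    ∀ (t : ℕ) (a' : Bool) (φ : S × Bool → ℝ),
      Measurable φ → (∃ B, ∀ x, |φ x| ≤ B) →
      ∫ ω, (Q a' (At t ω) (St t ω) - Yt t ω - γ * Q a' a' (St (t + 1) ω))
          * φ (St t ω, At t ω) ∂μ = 0 := by
  intro t a' φ hφ ⟨B, hB⟩
  have := hPprob
  obtain rfl : Pop = fun a => markovOperator (P a) := funext₃ hPop
  obtain rfl : Q = qFunction γ P r := funext₃ hQ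
  have hQm := measurable_qFunction hγ0.le hγ1 hPmeas hrmeas hrbdd a'
  have hQR := abs_qFunction_le hγ0.le hγ1 hPmeas hrmeas hrbdd a'
  -- The `Y_j` are only a.e. measurable, so `H t` need not be a sub-σ-algebra; `μ[· | H t]` would
  -- then be `0`, which the Markov assumption for `g = 1` excludes.
  have hm : H t ≤ ‹MeasurableSpace Ω› := le_of_condExp_one_ae_eq <|
    (hMarkov t _ measurable_const ⟨1, fun _ => by simp⟩).trans
      (Eventually.of_forall fun ω => markovOperator_const 1 _)
  have hSH : Measurable[H t] (St t) := by
    rw [measurable_iff_comap_le, hH]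
    exact le_sup_of_le_left (le_sup_of_le_left (le_iSup₂_of_le t le_rfl le_rfl))
  have hAH : Measurable[H t] (At t) := by
    rw [measurable_iff_comap_le, hH]
    exact le_sup_of_le_left (le_sup_of_le_right (le_iSup₂_of_le t le_rfl le_rfl))
  have hQH : Measurable[H t] fun ω => qFunction γ P r a' (At t ω) (St t ω) :=
    (measurable_from_prod_countable_right (f := fun p => qFunction γ P r a' p.1 p.2) hQm).comp
      (hAH.prodMk hSH)
  have hQint : Integrable (fun ω => qFunction γ P r a' (At t ω) (St t ω)) μ :=
    .of_bound (hQH.mono hm le_rfl).aestronglyMeasurable _ (.of_forall fun _ => hQR _ _)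
  have hQ'int : Integrable (fun ω => qFunction γ P r a' a' (St (t + 1) ω)) μ :=
    .of_bound ((hQm a').comp (hSt (t + 1))).aestronglyMeasurable _ (.of_forall fun _ => hQR _ _)
  refine integral_mul_eq_zero_of_condExp_ae_eq_zero hm
    ((hQint.sub (hYt t)).sub (hQ'int.const_mul γ)) (hφ.comp (hSH.prodMk hAH)).stronglyMeasurable
    (fun ω => hB _) ?_
  exact condExp_sub_sub_mul_ae_eq_zero hm γ hQH.stronglyMeasurable hQint (hYt t) hQ'int (hCMI t)
    (hMarkov t _ (hQm a') ⟨_, hQR a'⟩) fun ω =>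
      qFunction_eq_add_mul_markovOperator hγ0.le hγ1 hPmeas hrmeas hrbdd a' _ _

/-- For every time `t ≥ 0`, every action `a' ∈ {0,1}`, and every bounded
measurable test function `φ : S × {0,1} → ℝ`, one has
`E[{Q(a';A_t,S_t) − Y_t − γ Q(a';a',S_{t+1})} · φ(S_t, A_t)] = 0`. -/
theorem q_function_estimating_equation
    {S : Type*} [MeasurableSpace S]
    {Ω : Type*} [MeasurableSpace Ω] (μ : Measure Ω) [IsProbabilityMeasure μ]
    -- the Markov transition kernel `P(·;a,s)`
    (P : Bool → S → Measure S)
    (hPprob : ∀ a s, IsProbabilityMeasure (P a s))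
    (hPmeas : ∀ (a : Bool) (f : S → ℝ), Measurable f →
      Measurable fun s => ∫ s', f s' ∂(P a s))
    -- the bounded measurable reward function
    (r : Bool → S → ℝ) (R : ℝ)
    (hrmeas : ∀ a, Measurable (r a))
    (hrbdd : ∀ a s, |r a s| ≤ R)
    -- the discount factor
    (γ : ℝ) (hγ0 : 0 < γ) (hγ1 : γ < 1)
    -- the transition operator `P_a`
    (Pop : Bool → (S → ℝ) → (S → ℝ))
    (hPop : ∀ a f s, Pop a f s = ∫ s', f s' ∂(P a s))
    -- the value function and the Q-function
    (V : Bool → S → ℝ)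
    (hV : ∀ a s, V a s = ∑' t : ℕ, γ ^ t * ((Pop a)^[t] (r a)) s)
    (Q : Bool → Bool → S → ℝ)
    (hQ : ∀ a' a s, Q a' a s
      = r a s + ∑' t : ℕ, γ ^ (t + 1) * (Pop a ((Pop a')^[t] (r a'))) s)
    -- the observed state, action and outcome processes
    (St : ℕ → Ω → S) (At : ℕ → Ω → Bool) (Yt : ℕ → Ω → ℝ)
    (hSt : ∀ t, Measurable (St t)) (hAt : ∀ t, Measurable (At t))
    (hYt : ∀ t, Integrable (Yt t) μ)
    -- the filtration `H_t = σ(S_0, A_0, Y_0, …, S_{t−1}, A_{t−1}, Y_{t−1}, S_t, A_t)`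
    (H : ℕ → MeasurableSpace Ω)
    (hH : ∀ t, H t
      = (⨆ j ≤ t, MeasurableSpace.comap (St j) inferInstance)
        ⊔ (⨆ j ≤ t, MeasurableSpace.comap (At j) inferInstance)
        ⊔ (⨆ j < t, MeasurableSpace.comap (Yt j) inferInstance))
    -- the observed-data Markov assumption
    (hMarkov : ∀ (t : ℕ) (g : S → ℝ), Measurable g → (∃ B, ∀ s, |g s| ≤ B) →
      μ[(fun ω => g (St (t + 1) ω)) | H t] =ᵐ[μ] fun ω => Pop (At t ω) g (St t ω))
    -- the conditional mean independence assumption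
    (hCMI : ∀ t : ℕ, μ[Yt t | H t] =ᵐ[μ] fun ω => r (At t ω) (St t ω)) :
    ∀ (t : ℕ) (a' : Bool) (φ : S × Bool → ℝ),
      Measurable φ → (∃ B, ∀ x, |φ x| ≤ B) →
      ∫ ω, (Q a' (At t ω) (St t ω) - Yt t ω - γ * Q a' a' (St (t + 1) ω))
          * φ (St t ω, At t ω) ∂μ = 0 :=
  q_function_estimating_equation_general μ P hPprob hPmeas r R hrmeas hrbdd γ hγ0 hγ1 Pop hPop Q hQ
    St At Yt hSt hYt H hH hMarkov hCMI
end

section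
/- For every vector a ∈ ℝ^q, writing f(s) = a^⊤Ψ(s), one has a^⊤ [ ∫∫ Ψ(s) (Ψ(s) − γ Ψ(s'))^⊤ μ(ds) μ(ds') ] a = m ∫ f² dμ − γ (∫ f dμ)² ≥ (1 − γ) m ∫ f² dμ. If in addition the Gram matrix ∫ Ψ(s) Ψ(s)^⊤ μ(ds) has smallest eigenvalue at least 1/c̄ for some c̄ > 0, then a^⊤ [ ∫∫ Ψ(s) (Ψ(s) − γ Ψ(s'))^⊤ μ(ds) μ(ds') ] a ≥ (1 − γ) (m/c̄) ‖a‖₂² for every a ∈ ℝ^q. -/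
/-!
Integrating out `s'` shows that the matrix is `m • G - γ • vecMulVec v v` with `v = ∫ Ψ dμ`, so
its quadratic form at `a` is `m ∫ f² - γ (∫ f)²`. Cauchy–Schwarz against the constant function
gives `(∫ f)² ≤ m ∫ f²`, hence the lower bound `(1 - γ) m ∫ f²`; since `aᵀ G a = ∫ f²`, the
eigenvalue bound on `G` turns this into `(1 - γ) (m / c̄) ‖a‖²`.
-/

open MeasureTheory Matrix

section

variable {S ι : Type*} [MeasurableSpace S] {μ : Measure S}

theorem sq_integral_le_measureReal_univ_mul_integral_sq [IsFiniteMeasure μ] {f : S → ℝ}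
    (hf : MemLp f 2 μ) :
    (∫ s, f s ∂μ) ^ 2 ≤ μ.real Set.univ * ∫ s, f s ^ 2 ∂μ := by
  set m := μ.real Set.univ
  set I := ∫ s, f s ∂μ
  have hf1 : Integrable f μ := hf.integrable one_le_two
  have hf2 : Integrable (fun s => f s ^ 2) μ := hf.integrable_sq
  have hexpand : ∫ s, (m * f s - I) ^ 2 ∂μ = m * (m * ∫ s, f s ^ 2 ∂μ - I ^ 2) := by
    have hpoint : ∀ s, (m * f s - I) ^ 2 = m ^ 2 * f s ^ 2 - (2 * m * I * f s - I ^ 2) :=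
      fun s => by ring
    have hlin : Integrable (fun s => 2 * m * I * f s - I ^ 2) μ :=
      (hf1.const_mul _).sub (integrable_const _)
    simp_rw [hpoint]
    rw [integral_sub (hf2.const_mul _) hlin,
      integral_sub (hf1.const_mul _) (integrable_const _), integral_const_mul, integral_const_mul,
      integral_const, smul_eq_mul]
    ring
  have hnonneg : 0 ≤ m * (m * ∫ s, f s ^ 2 ∂μ - I ^ 2) :=
    hexpand ▸ integral_nonneg fun s => sq_nonneg _
  rcases eq_zero_or_neZero μ with rfl | _
  · simp [I]
  · nlinarith [(mul_nonneg_iff_of_pos_left measureReal_univ_pos).1 hnonneg]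

theorem integral_integral_mul_sub_const_mul [IsFiniteMeasure μ] {f g h : S → ℝ}
    (hf : Integrable f μ) (hfg : Integrable (fun s => f s * g s) μ) (hh : Integrable h μ)
    (γ : ℝ) :
    ∫ s, ∫ s', f s * (g s - γ * h s') ∂μ ∂μ
      = μ.real Set.univ * ∫ s, f s * g s ∂μ - γ * (∫ s, f s ∂μ) * ∫ s, h s ∂μ := by
  have hinner : ∀ s, ∫ s', f s * (g s - γ * h s') ∂μ
      = μ.real Set.univ * (f s * g s) - γ * (∫ s', h s' ∂μ) * f s := by
    intro s
    simp_rw [mul_sub, ← mul_assoc, mul_comm (f s) γ]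
    rw [integral_sub (integrable_const _) (hh.const_mul _), integral_const, integral_const_mul,
      smul_eq_mul]
    ring
  simp_rw [hinner]
  rw [integral_sub (hfg.const_mul _) (hf.const_mul _), integral_const_mul, integral_const_mul]
  ring

variable [Fintype ι] {Ψ : S → ι → ℝ}

theorem memLp_dotProduct {p : ENNReal} (hΨ : ∀ i, MemLp (fun s => Ψ s i) p μ) (a : ι → ℝ) :
    MemLp (fun s => a ⬝ᵥ Ψ s) p μ := by
  simpa [dotProduct] using memLp_finsetSum Finset.univ fun i _ => (hΨ i).const_mul (a i)

theorem integral_dotProduct (hΨ : ∀ i, Integrable (fun s => Ψ s i) μ) (a : ι → ℝ) :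
    ∫ s, a ⬝ᵥ Ψ s ∂μ = a ⬝ᵥ fun i => ∫ s, Ψ s i ∂μ := by
  simp only [dotProduct]
  rw [integral_finsetSum _ fun i _ => (hΨ i).const_mul _]
  simp_rw [integral_const_mul]

theorem integral_dotProduct_mulVec {N : S → Matrix ι ι ℝ}
    (hN : ∀ i j, Integrable (fun s => N s i j) μ) (a b : ι → ℝ) :
    ∫ s, a ⬝ᵥ N s *ᵥ b ∂μ = a ⬝ᵥ (Matrix.of fun i j => ∫ s, N s i j ∂μ) *ᵥ b := by
  simp only [dotProduct, mulVec, Finset.mul_sum, of_apply]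
  rw [integral_finsetSum _ fun i _ => integrable_finsetSum _ fun j _ =>
    ((hN i j).mul_const (b j)).const_mul (a i)]
  refine Finset.sum_congr rfl fun i _ => ?_
  rw [integral_finsetSum _ fun j _ => ((hN i j).mul_const (b j)).const_mul (a i)]
  simp_rw [integral_const_mul, integral_mul_const]

theorem dotProduct_mulVec_eq_integral_sq (hΨ : ∀ i, MemLp (fun s => Ψ s i) 2 μ)
    {G : Matrix ι ι ℝ} (hG : ∀ i j, G i j = ∫ s, Ψ s i * Ψ s j ∂μ) (a : ι → ℝ) :
    a ⬝ᵥ G *ᵥ a = ∫ s, (a ⬝ᵥ Ψ s) ^ 2 ∂μ := by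
  have hGeq : G = Matrix.of fun i j => ∫ s, vecMulVec (Ψ s) (Ψ s) i j ∂μ := by
    ext i j; simp [hG, vecMulVec_apply]
  rw [hGeq, ← integral_dotProduct_mulVec fun i j => by
    simpa only [vecMulVec_apply, Pi.mul_def] using (hΨ i).integrable_mul (hΨ j)]
  simp_rw [vecMulVec_mulVec, sq]
  simp [dotProduct_comm a]

theorem dotProduct_mulVec_eq_of_integral_integral [IsFiniteMeasure μ]
    (hΨ : ∀ i, MemLp (fun s => Ψ s i) 2 μ) (γ : ℝ) {M : Matrix ι ι ℝ}
    (hM : ∀ i j, M i j = ∫ s, ∫ s', Ψ s i * (Ψ s j - γ * Ψ s' j) ∂μ ∂μ) (a : ι → ℝ) :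
    a ⬝ᵥ M *ᵥ a
      = μ.real Set.univ * (∫ s, (a ⬝ᵥ Ψ s) ^ 2 ∂μ) - γ * (∫ s, a ⬝ᵥ Ψ s ∂μ) ^ 2 := by
  have hint : ∀ i, Integrable (fun s => Ψ s i) μ := fun i => (hΨ i).integrable one_le_two
  set v : ι → ℝ := fun i => ∫ s, Ψ s i ∂μ
  have hMeq : M = μ.real Set.univ • Matrix.of (fun i j => ∫ s, Ψ s i * Ψ s j ∂μ)
      - γ • vecMulVec v v := by
    ext i j
    rw [hM, integral_integral_mul_sub_const_mul (hint i)
      ((hΨ i).integrable_mul (hΨ j)) (hint j)]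
    simp [v, vecMulVec_apply, mul_assoc]
  rw [hMeq, sub_mulVec, smul_mulVec, smul_mulVec, vecMulVec_mulVec, dotProduct_sub,
    dotProduct_smul, dotProduct_smul,
    dotProduct_mulVec_eq_integral_sq hΨ (G := of _) (fun _ _ => rfl), integral_dotProduct hint]
  simp [v, sq, dotProduct_comm a]

end

theorem td_design_matrix_quadratic_form_bound_general
    {S : Type*} [MeasurableSpace S] (μ : Measure S) [IsFiniteMeasure μ]
    (q : ℕ)
    (γ : ℝ) (hγ0 : 0 ≤ γ) (hγ1 : γ < 1)
    (Ψ : S → Fin q → ℝ)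
    (hΨL2 : ∀ i, MemLp (fun s => Ψ s i) 2 μ)
    (m : ℝ) (hm : m = (μ Set.univ).toReal)
    -- the matrix `∫∫ Ψ(s)(Ψ(s) − γΨ(s'))^⊤ μ(ds)μ(ds')`
    (M : Matrix (Fin q) (Fin q) ℝ)
    (hM : ∀ i j, M i j = ∫ s, ∫ s', Ψ s i * (Ψ s j - γ * Ψ s' j) ∂μ ∂μ)
    -- the Gram matrix `∫ Ψ(s)Ψ(s)^⊤ μ(ds)`
    (G : Matrix (Fin q) (Fin q) ℝ)
    (hG : ∀ i j, G i j = ∫ s, Ψ s i * Ψ s j ∂μ) :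
    (∀ a : Fin q → ℝ,
      a ⬝ᵥ M *ᵥ a
          = m * (∫ s, (a ⬝ᵥ Ψ s) ^ 2 ∂μ) - γ * (∫ s, a ⬝ᵥ Ψ s ∂μ) ^ 2
        ∧ (1 - γ) * m * (∫ s, (a ⬝ᵥ Ψ s) ^ 2 ∂μ) ≤ a ⬝ᵥ M *ᵥ a) ∧
    (∀ cbar : ℝ, 0 < cbar →
      (∀ a : Fin q → ℝ, (1 / cbar) * (∑ i, a i ^ 2) ≤ a ⬝ᵥ G *ᵥ a) →
      ∀ a : Fin q → ℝ, (1 - γ) * (m / cbar) * (∑ i, a i ^ 2) ≤ a ⬝ᵥ M *ᵥ a) := by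
  replace hm : m = μ.real Set.univ := hm
  have hMa := dotProduct_mulVec_eq_of_integral_integral hΨL2 γ hM
  have hlower : ∀ a : Fin q → ℝ, (1 - γ) * m * (∫ s, (a ⬝ᵥ Ψ s) ^ 2 ∂μ) ≤ a ⬝ᵥ M *ᵥ a := by
    intro a
    have hCS := sq_integral_le_measureReal_univ_mul_integral_sq (memLp_dotProduct hΨL2 a)
    rw [hMa, hm]
    nlinarith [mul_le_mul_of_nonneg_left hCS hγ0]
  refine ⟨fun a => ⟨hm ▸ hMa a, hlower a⟩, fun cbar _ hGram a => ?_⟩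
  have hm0 : 0 ≤ m := hm ▸ measureReal_nonneg
  calc (1 - γ) * (m / cbar) * (∑ i, a i ^ 2)
      = (1 - γ) * m * ((1 / cbar) * (∑ i, a i ^ 2)) := by ring
    _ ≤ (1 - γ) * m * (∫ s, (a ⬝ᵥ Ψ s) ^ 2 ∂μ) := by
        rw [← dotProduct_mulVec_eq_integral_sq hΨL2 hG a]
        exact mul_le_mul_of_nonneg_left (hGram a) (mul_nonneg (by linarith) hm0)
    _ ≤ a ⬝ᵥ M *ᵥ a := hlower a

/-- For every `a ∈ ℝ^q`, with `f(s) = a^⊤Ψ(s)`,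
`a^⊤ [∫∫ Ψ(s)(Ψ(s) − γΨ(s'))^⊤ μ(ds)μ(ds')] a = m ∫ f² dμ − γ (∫ f dμ)²
  ≥ (1 − γ) m ∫ f² dμ`.
If moreover the Gram matrix `∫ ΨΨ^⊤ dμ` has smallest eigenvalue at least `1/cbar` (`cbar > 0`),
i.e. `a^⊤(∫ΨΨ^⊤dμ)a ≥ ‖a‖₂²/cbar` for all `a`, then
`a^⊤ [∫∫ Ψ(s)(Ψ(s) − γΨ(s'))^⊤ μ(ds)μ(ds')] a ≥ (1 − γ)(m/cbar)‖a‖₂²` for every `a`. -/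
theorem td_design_matrix_quadratic_form_bound
    {S : Type*} [MeasurableSpace S] (μ : Measure S) [IsFiniteMeasure μ]
    (q : ℕ)
    (γ : ℝ) (hγ0 : 0 ≤ γ) (hγ1 : γ < 1)
    (Ψ : S → Fin q → ℝ)
    (hΨmeas : ∀ i, Measurable fun s => Ψ s i)
    (hΨL2 : ∀ i, MemLp (fun s => Ψ s i) 2 μ)
    (m : ℝ) (hm : m = (μ Set.univ).toReal)
    -- the matrix `∫∫ Ψ(s)(Ψ(s) − γΨ(s'))^⊤ μ(ds)μ(ds')`
    (M : Matrix (Fin q) (Fin q) ℝ)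
    (hM : ∀ i j, M i j = ∫ s, ∫ s', Ψ s i * (Ψ s j - γ * Ψ s' j) ∂μ ∂μ)
    -- the Gram matrix `∫ Ψ(s)Ψ(s)^⊤ μ(ds)`
    (G : Matrix (Fin q) (Fin q) ℝ)
    (hG : ∀ i j, G i j = ∫ s, Ψ s i * Ψ s j ∂μ) :
    (∀ a : Fin q → ℝ,
      a ⬝ᵥ M *ᵥ a
          = m * (∫ s, (a ⬝ᵥ Ψ s) ^ 2 ∂μ) - γ * (∫ s, a ⬝ᵥ Ψ s ∂μ) ^ 2
        ∧ (1 - γ) * m * (∫ s, (a ⬝ᵥ Ψ s) ^ 2 ∂μ) ≤ a ⬝ᵥ M *ᵥ a) ∧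
    (∀ cbar : ℝ, 0 < cbar →
      (∀ a : Fin q → ℝ, (1 / cbar) * (∑ i, a i ^ 2) ≤ a ⬝ᵥ G *ᵥ a) →
      ∀ a : Fin q → ℝ, (1 - γ) * (m / cbar) * (∑ i, a i ^ 2) ≤ a ⬝ᵥ M *ᵥ a) :=
  td_design_matrix_quadratic_form_bound_general μ q γ hγ0 hγ1 Ψ hΨL2 m hm M hM G hG
end

section
/- Let (ε_t)_{t≥0} be real square-integrable random variables with mean zero and covariances E[ε_s ε_t] = ρ^{|s−t|} for all s, t ≥ 0, where ρ ∈ (−1, 1). Define the alternating-sign estimator τ̂_T = (2/T) Σ_{t=0}^{T−1} (−1)^{t+1} ε_t. Then lim_{T→∞} T · E[τ̂_T²] = 4(1 − ρ)/(1 + ρ). -/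
/-!
Expanding the square, `E[τ̂_T²] = (4/T²) Σ_{s,t<T} (-1)^{s+t} ρ^{|s-t|}`, and since
`s + t ≡ |s - t| (mod 2)` this is `(4/T²) Σ_{s,t<T} r^{|s-t|}` with `r = -ρ`. That double sum has
the closed form `T (1+r)/(1-r) - 2r(1-r^T)/(1-r)²`, so `T E[τ̂_T²] → 4(1+r)/(1-r) = 4(1-ρ)/(1+ρ)`.
-/

open MeasureTheory Filter Topology Finset

lemma neg_one_pow_succ_mul_neg_one_pow_succ_mul_pow_natAbs_sub {R : Type*} [CommRing R]
    (x : R) (s t : ℕ) :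
    (-1 : R) ^ (s + 1) * (-1) ^ (t + 1) * x ^ ((s : ℤ) - t).natAbs
      = (-x) ^ ((s : ℤ) - t).natAbs := by
  rw [← pow_add, neg_pow x, neg_one_pow_eq_pow_mod_two (s + 1 + (t + 1)),
    neg_one_pow_eq_pow_mod_two ((s : ℤ) - t).natAbs,
    show (s + 1 + (t + 1)) % 2 = ((s : ℤ) - t).natAbs % 2 by omega]

lemma sum_range_pow_natAbs_sub_left {K : Type*} [Field K] {r : K} (hr : r ≠ 1) (T : ℕ) :
    ∑ t ∈ range T, r ^ ((T : ℤ) - t).natAbs = r * (r ^ T - 1) / (r - 1) := by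
  have hshift : ∀ t ∈ range T, r ^ ((T : ℤ) - t).natAbs = r ^ (T - 1 - t + 1) := by
    intro t ht
    rw [mem_range] at ht
    congr 1
    omega
  rw [sum_congr rfl hshift, sum_range_reflect (fun j => r ^ (j + 1)) T]
  simp_rw [pow_succ, ← sum_mul, geom_sum_eq hr T]
  ring

lemma sum_range_sum_range_pow_natAbs_sub {K : Type*} [Field K] {r : K} (hr : r ≠ 1) (T : ℕ) :
    ∑ s ∈ range T, ∑ t ∈ range T, r ^ ((s : ℤ) - t).natAbs
      = (1 + r) / (1 - r) * T - 2 * r / (1 - r) ^ 2 * (1 - r ^ T) := by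
  have h1r : (1 : K) - r ≠ 0 := sub_ne_zero.mpr hr.symm
  have hr1 : r - 1 ≠ 0 := sub_ne_zero.mpr hr
  induction T with
  | zero => simp
  | succ T ih =>
    have hrow : ∀ s ∈ range T, ∑ t ∈ range (T + 1), r ^ ((s : ℤ) - t).natAbs
        = ∑ t ∈ range T, r ^ ((s : ℤ) - t).natAbs + r ^ ((T : ℤ) - s).natAbs := by
      intro s _
      rw [sum_range_succ, ← Int.natAbs_neg, neg_sub]
    rw [sum_range_succ, sum_congr rfl hrow, sum_add_distrib, ih, sum_range_succ,
      sum_range_pow_natAbs_sub_left hr, sub_self, Int.natAbs_zero, pow_zero]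
    push_cast
    field_simp
    ring

lemma tendsto_sum_range_sum_range_pow_natAbs_sub_div {r : ℝ} (hr : |r| < 1) :
    Tendsto (fun T : ℕ => (∑ s ∈ range T, ∑ t ∈ range T, r ^ ((s : ℤ) - t).natAbs) / T)
      atTop (𝓝 ((1 + r) / (1 - r))) := by
  have hr1 : r ≠ 1 := fun h => by simp [h] at hr
  have hremainder : Tendsto (fun T : ℕ => (1 - r ^ T) * (T : ℝ)⁻¹) atTop (𝓝 0) := by
    simpa using (tendsto_const_nhds.sub (tendsto_pow_atTop_nhds_zero_of_abs_lt_one hr)).mul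
      (tendsto_inv_atTop_zero.comp tendsto_natCast_atTop_atTop)
  have hlim := (tendsto_const_nhds (x := (1 + r) / (1 - r))).sub
    (hremainder.const_mul (2 * r / (1 - r) ^ 2))
  rw [mul_zero, sub_zero] at hlim
  refine hlim.congr' ?_
  filter_upwards [eventually_ne_atTop 0] with T hT
  rw [sum_range_sum_range_pow_natAbs_sub hr1]
  field_simp

lemma integral_sq_sum_mul {Ω ι : Type*} [MeasurableSpace Ω] {μ : Measure Ω} (s : Finset ι)
    (a : ι → ℝ) {X : ι → Ω → ℝ} (hX : ∀ i, MemLp (X i) 2 μ) :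
    ∫ ω, (∑ i ∈ s, a i * X i ω) ^ 2 ∂μ
      = ∑ i ∈ s, ∑ j ∈ s, a i * a j * ∫ ω, X i ω * X j ω ∂μ := by
  have hint : ∀ i j, Integrable (fun ω => a i * a j * (X i ω * X j ω)) μ :=
    fun i j => ((hX i).integrable_mul (hX j)).const_mul _
  simp_rw [sq, sum_mul_sum, show ∀ i j ω, a i * X i ω * (a j * X j ω)
    = a i * a j * (X i ω * X j ω) from fun _ _ _ => by ring]
  rw [integral_finsetSum _ fun i _ => integrable_finsetSum _ fun j _ => hint i j]
  refine sum_congr rfl fun i _ => ?_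
  rw [integral_finsetSum _ fun j _ => hint i j]
  simp_rw [integral_const_mul]

theorem alternating_design_asymptotic_variance_general
    {Ω : Type*} [MeasurableSpace Ω] (μ : Measure Ω)
    (ε : ℕ → Ω → ℝ)
    (hL2 : ∀ t, MemLp (ε t) 2 μ)
    (ρ : ℝ) (hρl : -1 < ρ) (hρu : ρ < 1)
    (hcov : ∀ s t : ℕ, ∫ ω, ε s ω * ε t ω ∂μ = ρ ^ ((s : ℤ) - (t : ℤ)).natAbs)
    (τ : ℕ → Ω → ℝ)
    (hτ : ∀ T ω, τ T ω
      = (2 / (T : ℝ)) * ∑ t ∈ Finset.range T, (-1 : ℝ) ^ (t + 1) * ε t ω) :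
    Tendsto (fun T : ℕ => (T : ℝ) * ∫ ω, (τ T ω) ^ 2 ∂μ) atTop
      (nhds (4 * (1 - ρ) / (1 + ρ))) := by
  have hvar : ∀ T : ℕ, (T : ℝ) * ∫ ω, (τ T ω) ^ 2 ∂μ
      = 4 * ((∑ s ∈ range T, ∑ t ∈ range T, (-ρ) ^ ((s : ℤ) - t).natAbs) / T) := by
    intro T
    simp_rw [hτ, mul_pow, integral_const_mul, integral_sq_sum_mul _ _ hL2, hcov,
      neg_one_pow_succ_mul_neg_one_pow_succ_mul_pow_natAbs_sub]
    rcases eq_or_ne (T : ℝ) 0 with hT | hT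
    · simp [hT]
    · field_simp
      ring
  have hρ : |-ρ| < 1 := by rw [abs_neg, abs_lt]; exact ⟨hρl, hρu⟩
  simp_rw [hvar]
  convert (tendsto_sum_range_sum_range_pow_natAbs_sub_div hρ).const_mul 4 using 2
  ring

/-- Let `(ε_t)` be square-integrable, mean-zero random variables with
covariances `E[ε_s ε_t] = ρ^{|s−t|}` for some `ρ ∈ (−1,1)`, and let
`τ̂_T = (2/T) Σ_{t<T} (−1)^{t+1} ε_t` be the alternating-sign estimator. Then
`lim_{T→∞} T E[τ̂_T²] = 4(1 − ρ)/(1 + ρ)`. -/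
theorem alternating_design_asymptotic_variance
    {Ω : Type*} [MeasurableSpace Ω] (μ : Measure Ω) [IsProbabilityMeasure μ]
    (ε : ℕ → Ω → ℝ)
    (hL2 : ∀ t, MemLp (ε t) 2 μ)
    (hmean : ∀ t, ∫ ω, ε t ω ∂μ = 0)
    (ρ : ℝ) (hρl : -1 < ρ) (hρu : ρ < 1)
    (hcov : ∀ s t : ℕ, ∫ ω, ε s ω * ε t ω ∂μ = ρ ^ ((s : ℤ) - (t : ℤ)).natAbs)
    (τ : ℕ → Ω → ℝ)
    (hτ : ∀ T ω, τ T ω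
      = (2 / (T : ℝ)) * ∑ t ∈ Finset.range T, (-1 : ℝ) ^ (t + 1) * ε t ω) :
    Tendsto (fun T : ℕ => (T : ℝ) * ∫ ω, (τ T ω) ^ 2 ∂μ) atTop
      (nhds (4 * (1 - ρ) / (1 + ρ))) :=
  alternating_design_asymptotic_variance_general μ ε hL2 ρ hρl hρu hcov τ hτ
end
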